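/- Let g be a finite-dimensional complex Lie algebra with a nondegenerate symmetric invariant bilinear form ⟨·,·⟩, dual bases X¹,…,X^d and X₁,…,X_d, and a finite-dimensional representation π : g → End V. Then in End V ⊗ End V ⊗ U(ĝ) the identity G₁[r]G₂[s] − G₂[s]G₁[r] = −Ω G₂[r+s] + G₂[r+s]Ω + r δ_{r,−s} Ω K holds for all r,s ∈ ℤ. -/

import Mathlib

/-!
With `[Xᵢ[r], Xⱼ[s]] = [Xᵢ, Xⱼ][r+s] + r δ_{r,−s} ⟨Xᵢ, Xⱼ⟩ K`, the commutator `[G₁[r], G₂[s]]`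
splits into a loop part and a central part. The central part is `r δ_{r,−s} Ω K` because
`Σⱼ ⟨Xᵢ, Xⱼ⟩ Xʲ = Xᵢ`. The loop part is `[G₂[r+s], Ω]` by invariance of the Casimir element:
`Σ Xⁱ ⊗ Xʲ ⊗ [Xᵢ, Xⱼ]` and `Σ Xᵇ ⊗ [Xᵃ, X_b] ⊗ Xₐ` both expand to
`Σ ⟨Xᵃ, [X_b, X_c]⟩ Xᵇ ⊗ Xᶜ ⊗ Xₐ`, using `⟨[X, Y], Z⟩ = ⟨X, [Y, Z]⟩`.
-/

noncomputable section

set_option maxHeartbeats 1000000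

open scoped TensorProduct

attribute [local instance 100] LieRing.ofAssociativeRing

section AffineGen

variable (L : Type) [LieRing L] [LieAlgebra ℂ L]
variable (V : Type) [AddCommGroup V] [Module ℂ V]
variable (Lh : Type) [LieRing Lh] [LieAlgebra ℂ Lh]

/-- `G₁[r] = Σᵢ π(Xⁱ) ⊗ 1 ⊗ Xᵢ[r] ∈ End V ⊗ End V ⊗ U(ĝ)`. -/
def G1aff (π : L →ₗ⁅ℂ⁆ Module.End ℂ V) (d : ℕ) (bX : Fin d → L) (Xlo : Fin d → L)
    (rep : L → ℤ → Lh) (r : ℤ) :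
    Module.End ℂ V ⊗[ℂ] (Module.End ℂ V ⊗[ℂ] UniversalEnvelopingAlgebra ℂ Lh) :=
  ∑ i : Fin d, π (bX i) ⊗ₜ[ℂ]
    ((1 : Module.End ℂ V) ⊗ₜ[ℂ] UniversalEnvelopingAlgebra.ι ℂ (rep (Xlo i) r))

/-- `G₂[s] = Σᵢ 1 ⊗ π(Xⁱ) ⊗ Xᵢ[s] ∈ End V ⊗ End V ⊗ U(ĝ)`. -/
def G2aff (π : L →ₗ⁅ℂ⁆ Module.End ℂ V) (d : ℕ) (bX : Fin d → L) (Xlo : Fin d → L)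
    (rep : L → ℤ → Lh) (s : ℤ) :
    Module.End ℂ V ⊗[ℂ] (Module.End ℂ V ⊗[ℂ] UniversalEnvelopingAlgebra ℂ Lh) :=
  ∑ i : Fin d, (1 : Module.End ℂ V) ⊗ₜ[ℂ]
    (π (bX i) ⊗ₜ[ℂ] UniversalEnvelopingAlgebra.ι ℂ (rep (Xlo i) s))

/-- `Ω ⊗ 1 = Σᵢ π(Xⁱ) ⊗ π(Xᵢ) ⊗ 1`. -/
def OmAff (π : L →ₗ⁅ℂ⁆ Module.End ℂ V) (d : ℕ) (bX : Fin d → L) (Xlo : Fin d → L) :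
    Module.End ℂ V ⊗[ℂ] (Module.End ℂ V ⊗[ℂ] UniversalEnvelopingAlgebra ℂ Lh) :=
  ∑ i : Fin d, π (bX i) ⊗ₜ[ℂ]
    (π (Xlo i) ⊗ₜ[ℂ] (1 : UniversalEnvelopingAlgebra ℂ Lh))

/-- `Ω ⊗ K = Σᵢ π(Xⁱ) ⊗ π(Xᵢ) ⊗ K`. -/
def OmKAff (π : L →ₗ⁅ℂ⁆ Module.End ℂ V) (d : ℕ) (bX : Fin d → L) (Xlo : Fin d → L)
    (K : Lh) :
    Module.End ℂ V ⊗[ℂ] (Module.End ℂ V ⊗[ℂ] UniversalEnvelopingAlgebra ℂ Lh) :=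
  ∑ i : Fin d, π (bX i) ⊗ₜ[ℂ]
    (π (Xlo i) ⊗ₜ[ℂ] UniversalEnvelopingAlgebra.ι ℂ K)

end AffineGen

namespace LinearMap.BilinForm

open TensorProduct

section Biorthogonal

variable {R M ι : Type*} [CommRing R] [AddCommGroup M] [Module R M] [Fintype ι] [DecidableEq ι]
  {B : LinearMap.BilinForm R M} {b : Module.Basis ι R M} {c : ι → M}

theorem sum_smul_basis_of_biorthogonal (hbc : ∀ i j, B (b i) (c j) = if i = j then 1 else 0)
    (x : M) : ∑ k, B x (c k) • b k = x := by
  have hcoord (k : ι) : B.flip (c k) = b.coord k :=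
    b.ext fun i => by simp [hbc, Finsupp.single_apply]
  simp_rw [← B.flip_apply, hcoord, b.coord_apply, b.sum_repr]

theorem sum_smul_of_biorthogonal (hbc : ∀ i j, B (b i) (c j) = if i = j then 1 else 0)
    (x : M) : ∑ k, B (b k) x • c k = x := by
  have := Module.Free.of_basis b
  have := Module.Finite.of_basis b
  let coord : M →ₗ[R] M := ∑ k, (B (b k)).smulRight (b k)
  have hleft : coord ∘ₗ b.constr R c = LinearMap.id := b.ext fun j => by simp [coord, hbc]
  -- a one-sided inverse on a finite free module is two-sided
  have hright := (LinearMap.comp_eq_id_comm R M).mp hleft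
  simpa [coord] using LinearMap.congr_fun hright x

end Biorthogonal

theorem sum_tmul_tmul_lie_of_biorthogonal {R L ι : Type*} [CommRing R] [LieRing L]
    [LieAlgebra R L] [Fintype ι] [DecidableEq ι] {B : LinearMap.BilinForm R L}
    {b : Module.Basis ι R L} {c : ι → L} (hinv : ∀ x y z : L, B ⁅x, y⁆ z = B x ⁅y, z⁆)
    (hbc : ∀ i j, B (b i) (c j) = if i = j then 1 else 0) :
    ∑ i, ∑ j, b i ⊗ₜ[R] (b j ⊗ₜ[R] ⁅c i, c j⁆) =
      ∑ a, ∑ i, b i ⊗ₜ[R] (⁅b a, c i⁆ ⊗ₜ[R] c a) := by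
  have hlhs (i j : ι) : b i ⊗ₜ[R] (b j ⊗ₜ[R] ⁅c i, c j⁆) =
      ∑ a, B (b a) ⁅c i, c j⁆ • (b i ⊗ₜ[R] (b j ⊗ₜ[R] c a)) := by
    conv_lhs => rw [← sum_smul_of_biorthogonal hbc ⁅c i, c j⁆]
    simp only [tmul_sum, tmul_smul]
  have hrhs (a i : ι) : b i ⊗ₜ[R] (⁅b a, c i⁆ ⊗ₜ[R] c a) =
      ∑ j, B (b a) ⁅c i, c j⁆ • (b i ⊗ₜ[R] (b j ⊗ₜ[R] c a)) := by
    conv_lhs => rw [← sum_smul_basis_of_biorthogonal hbc ⁅b a, c i⁆]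
    simp only [sum_tmul, tmul_sum, ← smul_tmul', tmul_smul, hinv]
  simp only [hlhs, hrhs]
  exact Finset.sum_comm_cycle

end LinearMap.BilinForm

section AffineCommutators

open TensorProduct

variable {L V Lh : Type} [LieRing L] [LieAlgebra ℂ L] [AddCommGroup V] [Module ℂ V]
  [LieRing Lh] [LieAlgebra ℂ Lh] {π : L →ₗ⁅ℂ⁆ Module.End ℂ V} {d : ℕ} {Xlo : Fin d → L}
  {rep : L → ℤ → Lh}

local notation "ι" => UniversalEnvelopingAlgebra.ι ℂ
-- the sums in the definitions are taken in the module `𝒯`, so `Finset.sum_mul_sum` needs the ring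
-- named explicitly to match them
local notation "𝒯" => Module.End ℂ V ⊗[ℂ] (Module.End ℂ V ⊗[ℂ] UniversalEnvelopingAlgebra ℂ Lh)

theorem G1aff_mul_G2aff_sub_G2aff_mul_G1aff {bX : Fin d → L} (r s : ℤ) :
    G1aff L V Lh π d bX Xlo rep r * G2aff L V Lh π d bX Xlo rep s -
        G2aff L V Lh π d bX Xlo rep s * G1aff L V Lh π d bX Xlo rep r =
      ∑ i, ∑ j, π (bX i) ⊗ₜ[ℂ] (π (bX j) ⊗ₜ[ℂ] ⁅ι (rep (Xlo i) r), ι (rep (Xlo j) s)⁆) := by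
  rw [G1aff, G2aff, Finset.sum_mul_sum (R := 𝒯), Finset.sum_mul_sum (R := 𝒯)]
  conv_lhs => enter [2]; rw [Finset.sum_comm]
  simp only [Algebra.TensorProduct.tmul_mul_tmul, one_mul, mul_one, Ring.lie_def, tmul_sub,
    Finset.sum_sub_distrib]

theorem G2aff_mul_OmAff_sub_OmAff_mul_G2aff {bX : Fin d → L} (t : ℤ) :
    G2aff L V Lh π d bX Xlo rep t * OmAff L V Lh π d bX Xlo -
        OmAff L V Lh π d bX Xlo * G2aff L V Lh π d bX Xlo rep t =
      ∑ a, ∑ i, π (bX i) ⊗ₜ[ℂ] (⁅π (bX a), π (Xlo i)⁆ ⊗ₜ[ℂ] ι (rep (Xlo a) t)) := by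
  rw [G2aff, OmAff, Finset.sum_mul_sum (R := 𝒯), Finset.sum_mul_sum (R := 𝒯)]
  conv_lhs => enter [2]; rw [Finset.sum_comm]
  simp only [Algebra.TensorProduct.tmul_mul_tmul, one_mul, mul_one, Ring.lie_def, sub_tmul,
    tmul_sub, Finset.sum_sub_distrib]

theorem OmKAff_eq_sum_smul {B : LinearMap.BilinForm ℂ L} {bX : Module.Basis (Fin d) ℂ L}
    (hdual : ∀ i j, B (bX i) (Xlo j) = if i = j then 1 else 0) (K : Lh) :
    OmKAff L V Lh π d bX Xlo K =
      ∑ i, ∑ j, B (Xlo i) (Xlo j) • π (bX i) ⊗ₜ[ℂ] (π (bX j) ⊗ₜ[ℂ] ι K) := by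
  refine Finset.sum_congr rfl fun i _ => ?_
  conv_lhs => rw [← LinearMap.BilinForm.sum_smul_basis_of_biorthogonal hdual (Xlo i)]
  simp only [map_sum, map_smul, sum_tmul, tmul_sum, smul_tmul', smul_tmul]

end AffineCommutators

open TensorProduct in
theorem affine_matrix_relations_general
    (L : Type) [LieRing L] [LieAlgebra ℂ L]
    (V : Type) [AddCommGroup V] [Module ℂ V]
    (B : LinearMap.BilinForm ℂ L)
    (hinv : ∀ X Y Z : L, B ⁅X, Y⁆ Z = B X ⁅Y, Z⁆)
    (d : ℕ) (bX : Module.Basis (Fin d) ℂ L) (Xlo : Fin d → L)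
    (hdual : ∀ i j, B (bX i) (Xlo j) = if i = j then 1 else 0)
    (π : L →ₗ⁅ℂ⁆ Module.End ℂ V)
    (Lh : Type) [LieRing Lh] [LieAlgebra ℂ Lh]
    (K : Lh) (rep : L → ℤ → Lh)
    (hlin : ∀ r : ℤ, IsLinearMap ℂ fun X : L => rep X r)
    (hbr : ∀ (X Y : L) (r s : ℤ),
      ⁅rep X r, rep Y s⁆ =
        rep ⁅X, Y⁆ (r + s) + (if r + s = 0 then (r : ℂ) * B X Y else 0) • K) :
    ∀ r s : ℤ,
      G1aff L V Lh π d bX Xlo rep r * G2aff L V Lh π d bX Xlo rep s -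
          G2aff L V Lh π d bX Xlo rep s * G1aff L V Lh π d bX Xlo rep r =
        -(OmAff L V Lh π d bX Xlo * G2aff L V Lh π d bX Xlo rep (r + s)) +
          G2aff L V Lh π d bX Xlo rep (r + s) * OmAff L V Lh π d bX Xlo +
          (if r + s = 0 then (r : ℂ) else 0) • OmKAff L V Lh π d bX Xlo K := by
  intro r s
  have hlie (X Y : L) : ⁅UniversalEnvelopingAlgebra.ι ℂ (rep X r),
      UniversalEnvelopingAlgebra.ι ℂ (rep Y s)⁆ =
        UniversalEnvelopingAlgebra.ι ℂ (rep ⁅X, Y⁆ (r + s)) +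
          (if r + s = 0 then (r : ℂ) else 0) • B X Y • UniversalEnvelopingAlgebra.ι ℂ K := by
    rw [← LieHom.map_lie, hbr, map_add, map_smul, smul_smul, ite_mul, zero_mul]
  let Φ := TensorProduct.map π.toLinearMap (TensorProduct.map π.toLinearMap
    ((UniversalEnvelopingAlgebra.ι ℂ).toLinearMap ∘ₗ IsLinearMap.mk' _ (hlin (r + s))))
  have hcasimir := congr(Φ $(LinearMap.BilinForm.sum_tmul_tmul_lie_of_biorthogonal hinv hdual))
  simp only [map_sum, Φ, map_tmul, LieHom.coe_toLinearMap, LinearMap.comp_apply,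
    IsLinearMap.mk'_apply, LieHom.map_lie] at hcasimir
  rw [G1aff_mul_G2aff_sub_G2aff_mul_G1aff, neg_add_eq_sub, G2aff_mul_OmAff_sub_OmAff_mul_G2aff,
    OmKAff_eq_sum_smul hdual, ← hcasimir]
  simp only [hlie, tmul_add, tmul_smul, Finset.sum_add_distrib, Finset.smul_sum]

/-- for a finite-dimensional complex Lie algebra `g` with nondegenerate
symmetric invariant form, dual bases, and finite-dimensional representation `π`, the
identity `G₁[r]G₂[s] − G₂[s]G₁[r] = −ΩG₂[r+s] + G₂[r+s]Ω + r δ_{r,−s} ΩK` holds in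
`End V ⊗ End V ⊗ U(ĝ)` for all integers `r, s`; here `ĝ = g[t,t⁻¹] ⊕ ℂK` is the affine
Kac–Moody algebra, encoded by a Lie algebra `Lh` with central element `K` and a family
`X[r] = rep X r` which is linear in `X`, satisfies the affine commutation relations, and
together with `K` forms a basis of `Lh`. -/
theorem affine_matrix_relations
    (L : Type) [LieRing L] [LieAlgebra ℂ L] [Module.Finite ℂ L]
    (V : Type) [AddCommGroup V] [Module ℂ V] [Module.Finite ℂ V]
    (B : LinearMap.BilinForm ℂ L)
    (hsym : ∀ X Y : L, B X Y = B Y X)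
    (hinv : ∀ X Y Z : L, B ⁅X, Y⁆ Z = B X ⁅Y, Z⁆)
    (hnd : B.Nondegenerate)
    (d : ℕ) (bX : Module.Basis (Fin d) ℂ L) (Xlo : Fin d → L)
    (hdual : ∀ i j, B (bX i) (Xlo j) = if i = j then 1 else 0)
    (π : L →ₗ⁅ℂ⁆ Module.End ℂ V)
    (Lh : Type) [LieRing Lh] [LieAlgebra ℂ Lh]
    (K : Lh) (rep : L → ℤ → Lh)
    (hlin : ∀ r : ℤ, IsLinearMap ℂ fun X : L => rep X r)
    (hK : ∀ z : Lh, ⁅K, z⁆ = 0)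
    (hbr : ∀ (X Y : L) (r s : ℤ),
      ⁅rep X r, rep Y s⁆ =
        rep ⁅X, Y⁆ (r + s) + (if r + s = 0 then (r : ℂ) * B X Y else 0) • K)
    (bh : Module.Basis ((Fin d × ℤ) ⊕ Unit) ℂ Lh)
    (hbh : ∀ (i : Fin d) (r : ℤ), bh (Sum.inl (i, r)) = rep (bX i) r)
    (hbhK : bh (Sum.inr ()) = K) :
    ∀ r s : ℤ,
      G1aff L V Lh π d bX Xlo rep r * G2aff L V Lh π d bX Xlo rep s -
          G2aff L V Lh π d bX Xlo rep s * G1aff L V Lh π d bX Xlo rep r =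
        -(OmAff L V Lh π d bX Xlo * G2aff L V Lh π d bX Xlo rep (r + s)) +
          G2aff L V Lh π d bX Xlo rep (r + s) * OmAff L V Lh π d bX Xlo +
          (if r + s = 0 then (r : ℂ) else 0) • OmKAff L V Lh π d bX Xlo K :=
  affine_matrix_relations_general L V B hinv d bX Xlo hdual π Lh K rep hlin hbr
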